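/- In a finite tree equipped with the metric where each edge has length 1, if (V_0, V_1, ..., V_n) is a path of maximal length among all simple paths in the tree, then the vertex V_1 is an isolated inner vertex: every neighbor of V_1 other than the vertex V_2 on the path has degree 1. -/

import Mathlib

open SimpleGraph Walk

lemma aux_mem {V : Type*} {G : SimpleGraph V} [DecidableEq V] (hT : G.IsTree)
    {a b c : V} (q : G.Walk a b) (hq : q.IsPath) (hc : G.Adj a c)
    (hmem : c ∈ q.support) : q.getVert 1 = c := by
  have ht : (q.takeUntil c hmem).IsPath := hq.takeUntil hmem
  have huniq := hT.IsAcyclic.path_unique ⟨q.takeUntil c hmem, ht⟩ (Path.singleton hc)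
  have heq : q.takeUntil c hmem = Walk.cons hc Walk.nil := congrArg Subtype.val huniq
  have := q.take_spec hmem
  rw [← this, Walk.getVert_append, heq]
  simp

lemma aux_deg {V : Type*} [Fintype V] {G : SimpleGraph V} [DecidableEq V]
    [DecidableRel G.Adj] (hT : G.IsTree)
    {a b : V} (q : G.Walk a b) (hq : q.IsPath)
    (hmax : ∀ (x y : V) (r : G.Walk x y), r.IsPath → r.length ≤ q.length)
    (h1 : 1 ≤ q.length) : G.degree a = 1 := by
  have hadj : G.Adj a (q.getVert 1) := by
    have := q.adj_getVert_succ (i := 0) (by omega)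
    simpa using this
  have : G.neighborFinset a = {q.getVert 1} := by
    ext c
    simp only [mem_neighborFinset, Finset.mem_singleton]
    constructor
    · intro hc
      by_cases hmem : c ∈ q.support
      · exact (aux_mem hT q hq hc hmem).symm
      · exfalso
        have hr : (Walk.cons hc.symm q).IsPath := hq.cons hmem
        have := hmax _ _ _ hr
        simp [Walk.length_cons] at this
      
    · rintro rfl; exact hadj
  rw [SimpleGraph.degree, this, Finset.card_singleton]

theorem stmt_1 {V : Type*} [Fintype V] [DecidableEq V] (G : SimpleGraph V)
    [DecidableRel G.Adj] (hT : G.IsTree)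
    (u v : V) (p : G.Walk u v) (hp : p.IsPath)
    (hmax : ∀ (a b : V) (q : G.Walk a b), q.IsPath → q.length ≤ p.length)
    (hlen : 2 ≤ p.length) :
    2 ≤ G.degree (p.getVert 1) ∧
      ∀ w : V, G.Adj (p.getVert 1) w → w ≠ p.getVert 2 → G.degree w = 1 := by
  cases p with
  | nil => simp at hlen
  | cons h p' =>
    rename_i x
    simp only [Walk.getVert_cons_succ, Walk.getVert_zero]
    have hp' : p'.IsPath := hp.of_cons
    have hnot : u ∉ p'.support := by
      have := hp.support_nodup
      simp [Walk.support_cons] at this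
      exact this.1
    have hlen' : 1 ≤ p'.length := by simp [Walk.length_cons] at hlen; omega
    have hadj1 : G.Adj x (p'.getVert 1) := by
      have := p'.adj_getVert_succ (i := 0) (by omega)
      simpa using this
    constructor
    · have hne : u ≠ p'.getVert 1 := by
        intro he
        exact hnot (he ▸ (Walk.mem_support_iff_exists_getVert.2 ⟨1, rfl, hlen'⟩))
      have hsub : ({u, p'.getVert 1} : Finset V) ⊆ G.neighborFinset x := by
        intro c hc
        simp only [Finset.mem_insert, Finset.mem_singleton] at hc
        rcases hc with rfl | rfl
        · exact (mem_neighborFinset _ _ _).2 h.symm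
        · exact (mem_neighborFinset _ _ _).2 hadj1
      have h2 : 2 ≤ (G.neighborFinset x).card := by
        rw [← Finset.card_pair hne]; exact Finset.card_le_card hsub
      rw [G.card_neighborFinset_eq_degree] at h2
      have key : ∀ (y : V) (inst : Fintype (G.neighborSet y)), y = x → 2 ≤ @SimpleGraph.degree V G y inst := by
        rintro y inst rfl; convert h2
      exact key _ _ (Walk.getVert_zero p')
    · intro w hw hne
      have hwmem : w ∉ p'.support := by
        intro hmem
        exact hne (aux_mem hT p' hp' hw hmem).symm
      have hq : (Walk.cons hw.symm p').IsPath := hp'.cons hwmem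
      have hmax' : ∀ (x y : V) (r : G.Walk x y), r.IsPath → r.length ≤ (Walk.cons hw.symm p').length := by
        intro x y r hr
        have := hmax _ _ _ hr
        simp [Walk.length_cons] at *
        omega
      exact aux_deg hT _ hq hmax' (by simp [Walk.length_cons])
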